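/- Composition of twists: Let R ∈ End(V⊗V) be an invertible solution of the Yang–Baxter equation. Suppose (F, G) is a twisting pair for R (i.e. G F₁₂⁻¹ and G F₂₃⁻¹ satisfy the intertwining conditions R₁₂ (G F₁₂⁻¹) = (G F₁₂⁻¹)^{(213)} R₁₂ and R₂₃ (G F₂₃⁻¹) = (G F₂₃⁻¹)^{(132)} R₂₃), and let R̃ = τ(F)⁻¹ R F. Suppose further (F′, G′) is a twisting pair for R̃. Then (F F′, G G′) is a twisting pair for R, and the resulting twisted R-matrix is τ(F F′)⁻¹ R (F F′) = τ(F′)⁻¹ R̃ F′. -/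

import Mathlib

open TensorProduct

noncomputable section
variable (k V : Type*) [Field k] [AddCommGroup V] [Module k V]

/-- The flip `P : V ⊗ V → V ⊗ V`. -/
def flipE : Module.End k (V ⊗[k] V) := (TensorProduct.comm k V V).toLinearMap

/-- `τ(X) = P X P`. -/
def tauE (X : Module.End k (V ⊗[k] V)) : Module.End k (V ⊗[k] V) :=
  flipE k V * X * flipE k V

/-- The embedding `X ↦ X₂₃` into `End(V ⊗ V ⊗ V)`. -/
def leg23 (X : Module.End k (V ⊗[k] V)) : Module.End k (V ⊗[k] (V ⊗[k] V)) :=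
  LinearMap.lTensor V X

/-- The embedding `X ↦ X₁₂` into `End(V ⊗ V ⊗ V)`. -/
def leg12 (X : Module.End k (V ⊗[k] V)) : Module.End k (V ⊗[k] (V ⊗[k] V)) :=
  (TensorProduct.assoc k V V V).toLinearMap ∘ₗ LinearMap.rTensor V X ∘ₗ
    (TensorProduct.assoc k V V V).symm.toLinearMap

/-- The flip of factors 1 and 2. -/
def P12 : Module.End k (V ⊗[k] (V ⊗[k] V)) := leg12 k V (flipE k V)

/-- The flip of factors 2 and 3. -/
def P23 : Module.End k (V ⊗[k] (V ⊗[k] V)) := leg23 k V (flipE k V)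

/-- The embedding `X ↦ X₁₃`. -/
def leg13 (X : Module.End k (V ⊗[k] V)) : Module.End k (V ⊗[k] (V ⊗[k] V)) :=
  P23 k V * leg12 k V X * P23 k V

/-- The Yang–Baxter equation `R₁₂R₁₃R₂₃ = R₂₃R₁₃R₁₂`. -/
def YB (R : Module.End k (V ⊗[k] V)) : Prop :=
  leg12 k V R * leg13 k V R * leg23 k V R = leg23 k V R * leg13 k V R * leg12 k V R

/-- `(F, G)` (with given two-sided inverses `F'`, `G'`) is a *twisting pair* for `R`:
`Φ := G F₁₂⁻¹` and `Ψ := G F₂₃⁻¹` satisfy `R₁₂ Φ = Φ^{(213)} R₁₂` and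
`R₂₃ Ψ = Ψ^{(132)} R₂₃`. -/
def TwistingPair (R F F' : Module.End k (V ⊗[k] V))
    (G G' : Module.End k (V ⊗[k] (V ⊗[k] V))) : Prop :=
  F * F' = 1 ∧ F' * F = 1 ∧ G * G' = 1 ∧ G' * G = 1 ∧
  leg12 k V R * (G * leg12 k V F') =
    (P12 k V * (G * leg12 k V F') * P12 k V) * leg12 k V R ∧
  leg23 k V R * (G * leg23 k V F') =
    (P23 k V * (G * leg23 k V F') * P23 k V) * leg23 k V R

/-!
Write `Φ = G F₁₂⁻¹` and `Φ₂ = G₂ F₂,₁₂⁻¹`; then `(G G₂)(F F₂)₁₂⁻¹ = Φ · F₁₂ Φ₂ F₁₂⁻¹`. Since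
`τ(F)₁₂ = F₁₂^{(213)}`, the hypothesis on `Φ₂` says that `R̃₁₂ = (F₁₂^{(213)})⁻¹ R₁₂ F₁₂`
intertwines `Φ₂` with `Φ₂^{(213)}`; conjugating by `F₁₂`, `R₁₂` intertwines `F₁₂ Φ₂ F₁₂⁻¹` with
its `(213)`-conjugate, and intertwiners multiply. The same argument works for the leg `23`.
-/

section Monoid

variable {M : Type*} [Monoid M]

def conjInvolution (p : M) (hp : p * p = 1) : M →* M where
  toFun x := p * x * p
  map_one' := by rw [mul_one, hp]
  map_mul' x y := by
    simp only [mul_assoc]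
    rw [← mul_assoc p p (y * p), hp, one_mul]

lemma mul_mul_mul_eq_one {a a' b b' : M} (ha : a * a' = 1) (hb : b * b' = 1) :
    a * b * (b' * a') = 1 := by
  rw [mul_assoc, ← mul_assoc b, hb, one_mul, ha]

theorem SemiconjBy.mul_conj_of_twist (σ : M →* M) {a x y f f' : M} (hf : f * f' = 1)
    (hx : SemiconjBy a x (σ x)) (hy : SemiconjBy (σ f' * a * f) y (σ y)) :
    SemiconjBy a (x * (f * y * f')) (σ (x * (f * y * f'))) := by
  have hσf : σ f * σ f' = 1 := by rw [← map_mul, hf, map_one]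
  have hconj : SemiconjBy a (f * y * f') (σ (f * y * f')) := calc
    a * (f * y * f') = σ f * ((σ f' * a * f) * y) * f' := by
      simp only [← mul_assoc, hσf, one_mul]
    _ = σ f * (σ y * (σ f' * a * f)) * f' := by rw [hy.eq]
    _ = σ (f * y * f') * a := by simp only [map_mul, mul_assoc, hf, mul_one]
  rw [map_mul]
  exact hx.mul_right hconj

theorem semiconjBy_twist_comp {N : Type*} [Monoid N] (ι : M →* N) (σ : N →* N)
    {r f f' f₂' t : M} {g g₂ : N} (hf : f * f' = 1) (hf' : f' * f = 1) (ht : ι t = σ (ι f'))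
    (h : SemiconjBy (ι r) (g * ι f') (σ (g * ι f')))
    (h₂ : SemiconjBy (ι (t * r * f)) (g₂ * ι f₂') (σ (g₂ * ι f₂'))) :
    SemiconjBy (ι r) (g * g₂ * ι (f₂' * f')) (σ (g * g₂ * ι (f₂' * f'))) := by
  have hsplit : g * g₂ * ι (f₂' * f') = g * ι f' * (ι f * (g₂ * ι f₂') * ι f') := by
    rw [map_mul]
    simp only [mul_assoc]
    rw [← mul_assoc (ι f') (ι f), ← map_mul ι f' f, hf', map_one, one_mul]
  rw [map_mul, map_mul, ht] at h₂
  rw [hsplit]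
  exact h.mul_conj_of_twist σ (by rw [← map_mul, hf, map_one]) h₂

end Monoid

lemma flipE_mul_self : flipE k V * flipE k V = 1 := by
  ext x y
  simp [flipE]

lemma tauE_mul (X Y : Module.End k (V ⊗[k] V)) :
    tauE k V (X * Y) = tauE k V X * tauE k V Y :=
  (conjInvolution (flipE k V) (flipE_mul_self k V)).map_mul X Y

def leg12Hom : Module.End k (V ⊗[k] V) →* Module.End k (V ⊗[k] (V ⊗[k] V)) where
  toFun := leg12 k V
  map_one' := by
    ext x
    simp [leg12]
  map_mul' X Y := by
    ext x
    simp [leg12, LinearMap.rTensor_mul]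

def leg23Hom : Module.End k (V ⊗[k] V) →* Module.End k (V ⊗[k] (V ⊗[k] V)) where
  toFun := leg23 k V
  map_one' := LinearMap.lTensor_id V (V ⊗[k] V)
  map_mul' := LinearMap.lTensor_mul V

lemma P12_mul_self : P12 k V * P12 k V = 1 :=
  show leg12Hom k V (flipE k V) * leg12Hom k V (flipE k V) = 1 by
    rw [← map_mul, flipE_mul_self, map_one]

lemma P23_mul_self : P23 k V * P23 k V = 1 :=
  show leg23Hom k V (flipE k V) * leg23Hom k V (flipE k V) = 1 by
    rw [← map_mul, flipE_mul_self, map_one]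

lemma leg12_tauE (X : Module.End k (V ⊗[k] V)) :
    leg12 k V (tauE k V X) = P12 k V * leg12 k V X * P12 k V :=
  show leg12Hom k V (flipE k V * X * flipE k V) = _ by rw [map_mul, map_mul]; rfl

lemma leg23_tauE (X : Module.End k (V ⊗[k] V)) :
    leg23 k V (tauE k V X) = P23 k V * leg23 k V X * P23 k V :=
  show leg23Hom k V (flipE k V * X * flipE k V) = _ by rw [map_mul, map_mul]; rfl

theorem twistingPair_comp
    (R F F' F₂ F₂' : Module.End k (V ⊗[k] V))
    (G G' G₂ G₂' : Module.End k (V ⊗[k] (V ⊗[k] V)))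
    (hTP : TwistingPair k V R F F' G G')
    (hTP₂ : TwistingPair k V (tauE k V F' * R * F) F₂ F₂' G₂ G₂') :
    TwistingPair k V R (F * F₂) (F₂' * F') (G * G₂) (G₂' * G') ∧
    tauE k V (F₂' * F') * R * (F * F₂) =
      tauE k V F₂' * (tauE k V F' * R * F) * F₂ := by
  obtain ⟨hF, hF', hG, hG', h12, h23⟩ := hTP
  obtain ⟨hF₂, hF₂', hG₂, hG₂', h12₂, h23₂⟩ := hTP₂
  refine ⟨⟨mul_mul_mul_eq_one hF hF₂, mul_mul_mul_eq_one hF₂' hF', mul_mul_mul_eq_one hG hG₂,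
    mul_mul_mul_eq_one hG₂' hG', ?_, ?_⟩, ?_⟩
  · exact semiconjBy_twist_comp (leg12Hom k V) (conjInvolution _ (P12_mul_self k V)) hF hF'
      (leg12_tauE k V F') h12 h12₂
  · exact semiconjBy_twist_comp (leg23Hom k V) (conjInvolution _ (P23_mul_self k V)) hF hF'
      (leg23_tauE k V F') h23 h23₂
  · rw [tauE_mul]
    simp only [mul_assoc]
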